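/- Let G = (V,E,c) be an edge-weighted directed graph without negative-weight closed walks. Fix a ∼-equivalence class [v_k] with at least two nodes, and let E_k^c = {(i,j) ∈ E : i,j ∈ [v_k], c_{ij} = d_{ij}}. Then a subset R_k ⊆ E_k^c is a redundant edge set of the weighted subgraph ([v_k], E_k^c, c) if and only if the unweighted directed graphs ([v_k], E_k^c) and ([v_k], E_k^c ∖ R_k) have the same reachability relation (i.e., for all i, j there is a walk i to j in one iff in the other). -/

import Mathlib

/-!
Inside the class of `v₀`, fix for every `x ∼ v₀` a zero-weight round trip `x → v₀ → x` and let
`q x` be the weight of its half `v₀ → x`. Closing an edge `(a, b)` with `b → v₀ → a` and using that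
closed walks are nonnegative gives `q b - q a ≤ c a b`, while the walk `a → v₀ → b` of weight
`q b - q a` gives `d a b ≤ q b - q a`. So every edge with `c = d` is tight for `q`, every walk in
`E_k^c` from `i` to `j` weighs `q j - q i`, and a replacement path of a removed edge `(i, j)`
weighs exactly `c i j`: redundancy reduces to reachability (a shortest walk being a path).
-/

/-- `l` is a walk in edge set `E`: a nonempty list of vertices with consecutive edges. -/
def IsWalk {V : Type*} (E : Set (V × V)) (l : List V) : Prop :=
  l ≠ [] ∧ l.Chain' (fun a b => (a, b) ∈ E)

/-- The weight of a walk: sum of edge weights along consecutive pairs (with multiplicity). -/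
def walkWeight {V : Type*} (c : V → V → ℝ) (l : List V) : ℝ :=
  ((l.zip l.tail).map fun p => c p.1 p.2).sum

/-- `l` is a walk from `u` to `v`. -/
def IsWalkFrom {V : Type*} (E : Set (V × V)) (u v : V) (l : List V) : Prop :=
  IsWalk E l ∧ l.head? = some u ∧ l.getLast? = some v

/-- A closed walk: a walk with at least one edge whose first and last vertices agree. -/
def IsClosedWalk {V : Type*} (E : Set (V × V)) (l : List V) : Prop :=
  IsWalk E l ∧ 2 ≤ l.length ∧ l.head? = l.getLast?

/-- A simple path from `u` to `v`: a walk with all traversed vertices distinct. -/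
def IsPathFrom {V : Type*} (E : Set (V × V)) (u v : V) (l : List V) : Prop :=
  IsWalkFrom E u v l ∧ l.Nodup

/-- A cycle: a closed walk all of whose vertices other than the repeated endpoint are distinct. -/
def IsCycle {V : Type*} (E : Set (V × V)) (l : List V) : Prop :=
  IsClosedWalk E l ∧ l.tail.Nodup

/-- `x` satisfies the precedence relation system of `(V, E, c)`. -/
def Satisfies {V : Type*} (E : Set (V × V)) (c : V → V → ℝ) (x : V → ℝ) : Prop :=
  ∀ e ∈ E, x e.1 - x e.2 ≤ c e.1 e.2

/-- `R` is a redundant edge set of `(V, E, c)`: every edge of `R` has a replacement path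
in the reduced graph of no greater weight. -/
def IsRedundantEdgeSet {V : Type*} (E : Set (V × V)) (c : V → V → ℝ)
    (R : Set (V × V)) : Prop :=
  R ⊆ E ∧ ∀ e ∈ R, ∃ l, IsPathFrom (E \ R) e.1 e.2 l ∧ walkWeight c l ≤ c e.1 e.2

/-- `w` is the minimum weight of a walk from `i` to `j` in `(V, E, c)` (attained). -/
def IsMinWalkWeight {V : Type*} (E : Set (V × V)) (c : V → V → ℝ) (i j : V) (w : ℝ) : Prop :=
  (∃ l, IsWalkFrom E i j l ∧ walkWeight c l = w) ∧
  ∀ l, IsWalkFrom E i j l → w ≤ walkWeight c l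

/-- The relation `∼`: `i ∼ j` iff `i = j` or some zero-weight closed walk traverses both. -/
def Sim {V : Type*} (E : Set (V × V)) (c : V → V → ℝ) (i j : V) : Prop :=
  i = j ∨ ∃ l, IsClosedWalk E l ∧ walkWeight c l = 0 ∧ i ∈ l ∧ j ∈ l

section Walks

variable {V : Type*} {E F : Set (V × V)} {c : V → V → ℝ} {u v w a b : V} {l l₁ l₂ : List V}

lemma walkWeight_singleton (c : V → V → ℝ) (a : V) : walkWeight c [a] = 0 := by
  simp [walkWeight]

lemma walkWeight_cons_cons (c : V → V → ℝ) (a b : V) (l : List V) :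
    walkWeight c (a :: b :: l) = c a b + walkWeight c (b :: l) := by
  simp [walkWeight]

lemma walkWeight_append_cons (c : V → V → ℝ) (l₁ l₂ : List V) (a : V) :
    walkWeight c (l₁ ++ a :: l₂) = walkWeight c (l₁ ++ [a]) + walkWeight c (a :: l₂) := by
  induction l₁ using List.twoStepInduction with
  | nil => simp [walkWeight_singleton]
  | singleton x => simp [walkWeight_cons_cons, walkWeight_singleton]
  | cons_cons x y l _ ih =>
    simp only [List.cons_append, walkWeight_cons_cons] at ih ⊢
    rw [ih]; ring

lemma isWalkFrom_iff : IsWalkFrom E u v l ↔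
    l ≠ [] ∧ l.IsChain (fun a b => (a, b) ∈ E) ∧ l.head? = some u ∧ l.getLast? = some v := by
  simp only [IsWalkFrom, IsWalk, and_assoc]; rfl

lemma isWalkFrom_singleton_iff : IsWalkFrom E u v [a] ↔ u = a ∧ v = a := by
  simp [isWalkFrom_iff, eq_comm]

lemma isWalkFrom_cons_cons_iff :
    IsWalkFrom E u w (a :: b :: l) ↔ u = a ∧ (a, b) ∈ E ∧ IsWalkFrom E b w (b :: l) := by
  simp only [isWalkFrom_iff, List.isChain_cons_cons, List.getLast?_cons_cons]
  simp [eq_comm]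
  tauto

lemma isWalkFrom_append_cons_iff :
    IsWalkFrom E u w (l₁ ++ v :: l₂) ↔
      IsWalkFrom E u v (l₁ ++ [v]) ∧ IsWalkFrom E v w (v :: l₂) := by
  simp only [isWalkFrom_iff, List.head?_append, List.getLast?_append_cons]
  rw [List.isChain_split]
  cases l₁ <;> simp <;> tauto

lemma isWalkFrom_pair (h : (u, v) ∈ E) : IsWalkFrom E u v [u, v] :=
  isWalkFrom_cons_cons_iff.2 ⟨rfl, h, isWalkFrom_singleton_iff.2 ⟨rfl, rfl⟩⟩

lemma IsWalkFrom.mono (h : IsWalkFrom E u v l) (hEF : E ⊆ F) : IsWalkFrom F u v l := by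
  rw [isWalkFrom_iff] at h ⊢
  exact ⟨h.1, h.2.1.imp fun _ _ hab => hEF hab, h.2.2⟩

lemma IsWalkFrom.exists_eq_cons (h : IsWalkFrom E u v l) : ∃ t, l = u :: t := by
  obtain ⟨-, -, hu, -⟩ := isWalkFrom_iff.1 h
  cases l with
  | nil => simp at hu
  | cons x t => exact ⟨t, by simpa using hu⟩

lemma IsWalkFrom.exists_eq_append_singleton (h : IsWalkFrom E u v l) : ∃ t, l = t ++ [v] := by
  obtain ⟨hne, -, -, hv⟩ := isWalkFrom_iff.1 h
  refine ⟨l.dropLast, ?_⟩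
  rw [List.getLast?_eq_some_getLast hne, Option.some_inj] at hv
  rw [← hv, List.dropLast_append_getLast]

lemma IsWalkFrom.append (h₁ : IsWalkFrom E u v l₁) (h₂ : IsWalkFrom E v w l₂) :
    IsWalkFrom E u w (l₁ ++ l₂.tail) := by
  obtain ⟨t₁, rfl⟩ := h₁.exists_eq_append_singleton
  obtain ⟨t₂, rfl⟩ := h₂.exists_eq_cons
  simpa using isWalkFrom_append_cons_iff.2 ⟨h₁, h₂⟩

lemma IsWalkFrom.walkWeight_append (h₁ : IsWalkFrom E u v l₁) (h₂ : IsWalkFrom E v w l₂) :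
    walkWeight c (l₁ ++ l₂.tail) = walkWeight c l₁ + walkWeight c l₂ := by
  obtain ⟨t₁, rfl⟩ := h₁.exists_eq_append_singleton
  obtain ⟨t₂, rfl⟩ := h₂.exists_eq_cons
  simpa using walkWeight_append_cons c t₁ t₂ v

lemma IsWalkFrom.exists_split (h : IsWalkFrom E u w l) (hv : v ∈ l) :
    ∃ l₁ l₂, IsWalkFrom E u v l₁ ∧ IsWalkFrom E v w l₂ ∧ l = l₁ ++ l₂.tail := by
  obtain ⟨t₁, t₂, rfl⟩ := List.append_of_mem hv
  obtain ⟨h₁, h₂⟩ := isWalkFrom_append_cons_iff.1 h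
  exact ⟨_, _, h₁, h₂, by simp⟩

lemma IsClosedWalk.exists_isWalkFrom (h : IsClosedWalk E l) : ∃ a, IsWalkFrom E a a l := by
  obtain ⟨hl, -, hcl⟩ := h
  cases l with
  | nil => exact absurd rfl hl.1
  | cons a t => exact ⟨a, hl, rfl, hcl ▸ rfl⟩

lemma IsWalkFrom.isClosedWalk (h : IsWalkFrom E u u l) (hl : 2 ≤ l.length) :
    IsClosedWalk E l :=
  ⟨h.1, hl, h.2.1.trans h.2.2.symm⟩

lemma IsClosedWalk.exists_round_trip (h : IsClosedWalk E l) (hu : u ∈ l) (hv : v ∈ l) :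
    ∃ l₁ l₂, IsWalkFrom E u v l₁ ∧ IsWalkFrom E v u l₂ ∧
      walkWeight c l₁ + walkWeight c l₂ = walkWeight c l := by
  obtain ⟨a, ha⟩ := h.exists_isWalkFrom
  obtain ⟨A, B, hA, hB, rfl⟩ := ha.exists_split hu
  rw [hA.walkWeight_append hB]
  rcases List.mem_append.1 hv with hvA | hvB
  · obtain ⟨A₁, A₂, hA₁, hA₂, rfl⟩ := hA.exists_split hvA
    refine ⟨_, A₂, hB.append hA₁, hA₂, ?_⟩
    rw [hB.walkWeight_append hA₁, hA₁.walkWeight_append hA₂]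
    ring
  · obtain ⟨B₁, B₂, hB₁, hB₂, rfl⟩ := hB.exists_split (List.mem_of_mem_tail hvB)
    refine ⟨B₁, _, hB₁, hB₂.append hA, ?_⟩
    rw [hB₂.walkWeight_append hA, hB₁.walkWeight_append hB₂]
    ring

lemma Sim.exists_round_trip (h : Sim E c u v) :
    ∃ l₁ l₂, IsWalkFrom E u v l₁ ∧ IsWalkFrom E v u l₂ ∧ walkWeight c l₁ + walkWeight c l₂ = 0 := by
  rcases h with rfl | ⟨l, hl, hl0, hu, hv⟩
  · exact ⟨[u], [u], isWalkFrom_singleton_iff.2 ⟨rfl, rfl⟩,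
      isWalkFrom_singleton_iff.2 ⟨rfl, rfl⟩, by simp [walkWeight_singleton]⟩
  · exact hl0 ▸ hl.exists_round_trip hu hv

lemma IsWalkFrom.exists_shorter_of_not_nodup (h : IsWalkFrom E u v l) (hl : ¬l.Nodup) :
    ∃ l', IsWalkFrom E u v l' ∧ l'.length < l.length := by
  obtain ⟨x, hx⟩ := not_forall_not.1 (mt List.nodup_iff_sublist.2 hl)
  obtain ⟨r₁, r₂, rfl, h₁, h₂⟩ := List.cons_sublist_iff.1 hx
  obtain ⟨a, b, rfl⟩ := List.append_of_mem h₁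
  obtain ⟨c, d, rfl⟩ := List.append_of_mem (List.singleton_sublist.1 h₂)
  rw [show a ++ x :: b ++ (c ++ x :: d) = a ++ x :: ((b ++ c) ++ x :: d) by simp] at h
  obtain ⟨hux, hxv⟩ := isWalkFrom_append_cons_iff.1 h
  rw [← List.cons_append] at hxv
  exact ⟨a ++ x :: d, isWalkFrom_append_cons_iff.2 ⟨hux, (isWalkFrom_append_cons_iff.1 hxv).2⟩,
    by simp; omega⟩

theorem IsWalkFrom.exists_isPathFrom {l : List V} (h : IsWalkFrom E u v l) :
    ∃ p, IsPathFrom E u v p := by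
  by_cases hl : l.Nodup
  · exact ⟨l, h, hl⟩
  obtain ⟨l', hl', hlt⟩ := h.exists_shorter_of_not_nodup hl
  exact exists_isPathFrom hl'
termination_by l.length

lemma IsWalkFrom.walkWeight_eq_sub {q : V → ℝ} (hq : ∀ p ∈ E, c p.1 p.2 = q p.2 - q p.1)
    (h : IsWalkFrom E u v l) : walkWeight c l = q v - q u := by
  induction l generalizing u with
  | nil => exact absurd rfl h.1.1
  | cons a t ih =>
    cases t with
    | nil =>
      obtain ⟨rfl, rfl⟩ := isWalkFrom_singleton_iff.1 h
      simp [walkWeight_singleton]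
    | cons b t =>
      obtain ⟨rfl, hab, h'⟩ := isWalkFrom_cons_cons_iff.1 h
      rw [walkWeight_cons_cons, ih h', hq _ hab]
      ring

end Walks

section Redundancy

variable {V : Type*} {E R : Set (V × V)} {c : V → V → ℝ} {u v : V} {l : List V}

lemma IsRedundantEdgeSet.exists_isWalkFrom_sdiff (hR : IsRedundantEdgeSet E c R)
    (h : IsWalkFrom E u v l) : ∃ l', IsWalkFrom (E \ R) u v l' := by
  induction l generalizing u with
  | nil => exact absurd rfl h.1.1
  | cons a t ih =>
    cases t with
    | nil =>
      exact ⟨[a], isWalkFrom_singleton_iff.2 (isWalkFrom_singleton_iff.1 h)⟩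
    | cons b t =>
      obtain ⟨rfl, hab, h'⟩ := isWalkFrom_cons_cons_iff.1 h
      obtain ⟨l', hl'⟩ := ih h'
      by_cases habR : (u, b) ∈ R
      · obtain ⟨p, hp, -⟩ := hR.2 _ habR
        exact ⟨_, hp.1.append hl'⟩
      · exact ⟨_, (isWalkFrom_pair (E := E \ R) ⟨hab, habR⟩).append hl'⟩

lemma isRedundantEdgeSet_of_forall_eq_sub {q : V → ℝ}
    (hq : ∀ p ∈ E, c p.1 p.2 = q p.2 - q p.1) (hRE : R ⊆ E)
    (hreach : ∀ e ∈ R, ∃ l, IsWalkFrom (E \ R) e.1 e.2 l) : IsRedundantEdgeSet E c R := by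
  refine ⟨hRE, fun e he => ?_⟩
  obtain ⟨l, hl⟩ := hreach e he
  obtain ⟨p, hp⟩ := hl.exists_isPathFrom
  refine ⟨p, hp, ?_⟩
  rw [hp.1.walkWeight_eq_sub fun p hp => hq p hp.1, hq e (hRE he)]

end Redundancy

lemma exists_potential_of_sim {V : Type*} {E : Set (V × V)} {c : V → V → ℝ}
    (hnn : ∀ l, IsClosedWalk E l → 0 ≤ walkWeight c l) (v₀ : V) :
    ∃ q : V → ℝ, (∀ a b, Sim E c a v₀ → Sim E c b v₀ → (a, b) ∈ E → q b - q a ≤ c a b) ∧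
      ∀ a b, Sim E c a v₀ → Sim E c b v₀ →
        ∃ l, IsWalkFrom E a b l ∧ walkWeight c l = q b - q a := by
  have : ∀ x, ∃ P Q : List V, Sim E c x v₀ →
      IsWalkFrom E x v₀ P ∧ IsWalkFrom E v₀ x Q ∧ walkWeight c P + walkWeight c Q = 0 := by
    intro x
    by_cases hx : Sim E c x v₀
    · obtain ⟨P, Q, hPQ⟩ := hx.exists_round_trip
      exact ⟨P, Q, fun _ => hPQ⟩
    · exact ⟨[], [], fun h => absurd h hx⟩
  choose P Q hPQ using this
  refine ⟨fun x => walkWeight c (Q x), fun a b ha hb hab => ?_, fun a b ha hb => ?_⟩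
  · obtain ⟨hPb, -, hb0⟩ := hPQ b hb
    obtain ⟨-, hQa, -⟩ := hPQ a ha
    have hab' := isWalkFrom_pair hab
    have hba := hPb.append hQa
    have hcycle := hnn _ ((hab'.append hba).isClosedWalk (by simp))
    rw [hab'.walkWeight_append hba, hPb.walkWeight_append hQa, walkWeight_cons_cons,
      walkWeight_singleton] at hcycle
    linarith
  · obtain ⟨hPa, -, ha0⟩ := hPQ a ha
    obtain ⟨-, hQb, -⟩ := hPQ b hb
    exact ⟨_, hPa.append hQb, by rw [hPa.walkWeight_append hQb]; linarith⟩

theorem stmt18_general {V : Type*} (E : Set (V × V)) (c : V → V → ℝ)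
    (hnn : ∀ l : List V, IsClosedWalk E l → 0 ≤ walkWeight c l)
    (v0 : V) (S : Set V) (hS : S = {x : V | Sim E c x v0})
    (d : V → V → ℝ)
    (hd : ∀ p : V × V, p ∈ E → p.1 ∈ S → p.2 ∈ S →
      IsMinWalkWeight E c p.1 p.2 (d p.1 p.2))
    (Ekc : Set (V × V))
    (hEkc : Ekc = {p ∈ E | p.1 ∈ S ∧ p.2 ∈ S ∧ c p.1 p.2 = d p.1 p.2})
    (Rk : Set (V × V)) (hRk : Rk ⊆ Ekc) :
    IsRedundantEdgeSet Ekc c Rk ↔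
      ∀ i ∈ S, ∀ j ∈ S,
        ((∃ l : List V, IsWalkFrom Ekc i j l) ↔
          (∃ l : List V, IsWalkFrom (Ekc \ Rk) i j l)) := by
  obtain ⟨q, hq_le, hq_walk⟩ := exists_potential_of_sim hnn v0
  have htight : ∀ p ∈ Ekc, c p.1 p.2 = q p.2 - q p.1 := by
    rw [hEkc, hS]
    rintro ⟨a, b⟩ ⟨hab, ha, hb, hcd⟩
    obtain ⟨l, hl, hlq⟩ := hq_walk a b ha hb
    refine le_antisymm ?_ (hq_le a b ha hb hab)
    rw [hcd, ← hlq]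
    exact (hd _ hab (hS ▸ ha) (hS ▸ hb)).2 l hl
  constructor
  · intro hR i _ j _
    exact ⟨fun ⟨l, hl⟩ => hR.exists_isWalkFrom_sdiff hl,
      fun ⟨l, hl⟩ => ⟨l, hl.mono Set.sdiff_subset⟩⟩
  · intro hreach
    refine isRedundantEdgeSet_of_forall_eq_sub htight hRk fun e he => ?_
    have he' := hRk he
    rw [hEkc] at he'
    exact (hreach _ he'.2.1 _ he'.2.2.1).1 ⟨_, isWalkFrom_pair (hRk he)⟩

theorem stmt18 {V : Type*} (E : Set (V × V)) (c : V → V → ℝ)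
    (hnn : ∀ l : List V, IsClosedWalk E l → 0 ≤ walkWeight c l)
    (v0 : V) (S : Set V) (hS : S = {x : V | Sim E c x v0})
    (htwo : ∃ a ∈ S, ∃ b ∈ S, a ≠ b)
    (d : V → V → ℝ)
    (hd : ∀ p : V × V, p ∈ E → p.1 ∈ S → p.2 ∈ S →
      IsMinWalkWeight E c p.1 p.2 (d p.1 p.2))
    (Ekc : Set (V × V))
    (hEkc : Ekc = {p ∈ E | p.1 ∈ S ∧ p.2 ∈ S ∧ c p.1 p.2 = d p.1 p.2})
    (Rk : Set (V × V)) (hRk : Rk ⊆ Ekc) :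
    IsRedundantEdgeSet Ekc c Rk ↔
      ∀ i ∈ S, ∀ j ∈ S,
        ((∃ l : List V, IsWalkFrom Ekc i j l) ↔
          (∃ l : List V, IsWalkFrom (Ekc \ Rk) i j l)) :=
  stmt18_general E c hnn v0 S hS d hd Ekc hEkc Rk hRk
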